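/- Let 𝒢 = {A_1, …, A_k} ⊂ UT(4,ℤ) with A_i = UT(α_i, β_i, κ_i; δ_i, ε_i, φ_i). Suppose the ℝ≥0-cone C generated by φ0(A_1), …, φ0(A_k) is a linear subspace of ℝ³ of dimension 2 (i.e., C = C ∩ (−C) and dim C = 2), and let p, q, r ∈ ℤ, not all zero, satisfy p α_i + q β_i + r κ_i = 0 for i = 1, …, k. If r ≠ 0, then U_{10} is reachable: there is a nonempty product of elements of 𝒢 lying in U_{10}. -/

import Mathlib

open Finset

/-- The 4×4 upper unitriangular integer matrix `UT(a,b,c;d,e,f)`. -/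
def UT (a b c d e f : ℤ) : Matrix (Fin 4) (Fin 4) ℤ :=
  !![1, a, d, f; 0, 1, b, e; 0, 0, 1, c; 0, 0, 0, 1]

/-- `φ0 : UT(4,ℤ) → ℤ³`, `UT(a,b,c;d,e,f) ↦ (a,b,c)`, followed by `ℤ³ → ℝ³`. -/
def phi0R (M : Matrix (Fin 4) (Fin 4) ℤ) : Fin 3 → ℝ :=
  ![(M 0 1 : ℝ), (M 1 2 : ℝ), (M 2 3 : ℝ)]

/-- `U_{10} = {UT(0,0,0;0,e,f) : e, f ∈ ℤ}`. -/
def U10 : Set (Matrix (Fin 4) (Fin 4) ℤ) :=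
  {M | ∃ e f, M = UT 0 0 0 0 e f}

/-- The `ℝ≥0`-cone generated by a finite family of vectors in `ℝⁿ`. -/
def coneFin {k n : ℕ} (v : Fin k → (Fin n → ℝ)) : Set (Fin n → ℝ) :=
  {x | ∃ r : Fin k → ℝ, (∀ i, 0 ≤ r i) ∧ x = ∑ i, r i • v i}

lemma UT_mul (a b c d e f a' b' c' d' e' f' : ℤ) :
    UT a b c d e f * UT a' b' c' d' e' f' =
    UT (a+a') (b+b') (c+c') (d+d'+a*b') (e+e'+b*c') (f+f'+a*e'+d*c') := by
  ext i j
  fin_cases i <;> fin_cases j <;>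
    simp [UT, Matrix.mul_apply, Fin.sum_univ_four, Matrix.vecHead, Matrix.vecTail] <;> ring

lemma UT_one : UT 0 0 0 0 0 0 = 1 := by
  ext i j
  fin_cases i <;> fin_cases j <;>
    simp [UT, Matrix.one_apply, Matrix.vecHead, Matrix.vecTail]

def Pu (M : Matrix (Fin 4) (Fin 4) ℤ) (a b c d : ℤ) : Prop :=
  ∃ e f, M = UT a b c d e f

lemma Pu_mul {M M' a b c d a' b' c' d'} (h : Pu M a b c d) (h' : Pu M' a' b' c' d') :
    Pu (M * M') (a+a') (b+b') (c+c') (d+d'+a*b') := by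
  obtain ⟨e, f, rfl⟩ := h
  obtain ⟨e', f', rfl⟩ := h'
  exact ⟨_, _, UT_mul ..⟩

lemma Pu_one : Pu 1 0 0 0 0 := ⟨0, 0, UT_one.symm⟩

lemma Pu_congr {M : Matrix (Fin 4) (Fin 4) ℤ} {a b c d a' b' c' d' : ℤ}
    (h : Pu M a b c d) (h1 : a = a') (h2 : b = b') (h3 : c = c') (h4 : d = d') :
    Pu M a' b' c' d' := by subst h1; subst h2; subst h3; subst h4; exact h

lemma choose_two (m : ℕ) : ((m.choose 2 : ℤ)) * 2 = m*m - m := by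
  induction m with
  | zero => simp
  | succ n ih =>
    have : (n+1).choose 2 = n.choose 2 + n := by
      rw [Nat.choose_succ_succ]; simp [Nat.choose_one_right]; omega
    rw [this]; push_cast; linarith [ih]

lemma Pu_pow {M a b c d} (h : Pu M a b c d) (m : ℕ) :
    Pu (M ^ m) (m*a) (m*b) (m*c) (m*d + (m.choose 2 : ℤ)*(a*b)) := by
  induction m with
  | zero => simpa using Pu_one
  | succ n ih =>
    have := Pu_mul ih h
    rw [← pow_succ] at this
    have hc : (n+1).choose 2 = n.choose 2 + n := by
      rw [Nat.choose_succ_succ]; simp [Nat.choose_one_right]; omega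
    convert this using 1 <;> push_cast [hc] <;> ring

lemma pow_mem_sub {M : Type*} [Monoid M] (S : Subsemigroup M) {x : M} (hx : x ∈ S) :
    ∀ m : ℕ, 1 ≤ m → x ^ m ∈ S := by
  intro m hm
  induction m with
  | zero => omega
  | succ n ih =>
    rcases Nat.eq_or_lt_of_le hm with h | h
    · simpa [← h] using hx
    · rw [pow_succ]; exact S.mul_mem (ih (by omega)) hx

lemma list_prod_mem_or_one {M : Type*} [Monoid M] {k : ℕ} (A : Fin k → M) (n : Fin k → ℕ)
    (L : List (Fin k)) :
    (L.map fun l => A l ^ n l).prod ∈ Subsemigroup.closure (Set.range A) ∨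
      (L.map fun l => A l ^ n l).prod = 1 := by
  induction L with
  | nil => right; simp
  | cons a L ih =>
    rw [List.map_cons, List.prod_cons]
    rcases Nat.eq_zero_or_pos (n a) with h0 | h1
    · rw [h0, pow_zero, one_mul]; exact ih
    · have ha : A a ^ n a ∈ Subsemigroup.closure (Set.range A) :=
        pow_mem_sub _ (Subsemigroup.subset_closure (Set.mem_range_self a)) _ h1
      rcases ih with h | h
      · exact Or.inl (Subsemigroup.mul_mem _ ha h)
      · rw [h, mul_one]; exact Or.inl ha

lemma Pu_list {k : ℕ} (A : Fin k → Matrix (Fin 4) (Fin 4) ℤ) (α β κ δ : Fin k → ℤ)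
    (hA : ∀ l, Pu (A l) (α l) (β l) (κ l) (δ l)) (n : Fin k → ℕ) (L : List (Fin k)) :
    ∃ d, Pu ((L.map fun l => A l ^ n l).prod)
      ((L.map fun l => (n l : ℤ) * α l).sum)
      ((L.map fun l => (n l : ℤ) * β l).sum)
      ((L.map fun l => (n l : ℤ) * κ l).sum) d := by
  induction L with
  | nil => exact ⟨0, by simpa using Pu_one⟩
  | cons a L ih =>
    obtain ⟨d, hd⟩ := ih
    rw [List.map_cons, List.prod_cons, List.map_cons, List.sum_cons,
      List.map_cons, List.sum_cons, List.map_cons, List.sum_cons]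
    exact ⟨_, Pu_mul (Pu_pow (hA a) (n a)) hd⟩

/-- The word-combinatorics core. -/
theorem wordpart (k : ℕ) (α β κ δ : Fin k → ℤ)
    (A : Fin k → Matrix (Fin 4) (Fin 4) ℤ)
    (hA : ∀ l, Pu (A l) (α l) (β l) (κ l) (δ l))
    (i j : Fin k) (n : Fin k → ℕ)
    (hD : α i * β j - α j * β i ≠ 0)
    (hni : 1 ≤ n i) (hnj : 1 ≤ n j)
    (hsa : ∑ l, (n l : ℤ) * α l = 0)
    (hsb : ∑ l, (n l : ℤ) * β l = 0)
    (hsc : ∑ l, (n l : ℤ) * κ l = 0) :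
    ∃ M ∈ Subsemigroup.closure (Set.range A), M ∈ U10 := by
  classical
  have hij : i ≠ j := by rintro rfl; simp at hD
  set n' : Fin k → ℕ := fun l => if l = i then n i - 1 else if l = j then n j - 1 else n l
    with hn'
  -- sums for n'
  have hsum' : ∀ g : Fin k → ℤ, ∑ l, (n' l : ℤ) * g l = ∑ l, (n l : ℤ) * g l - g i - g j := by
    intro g
    have key : ∀ l, (n' l : ℤ) * g l
        = (n l : ℤ) * g l - (if l = i then g l else 0) - (if l = j then g l else 0) := by
      intro l
      by_cases h1 : l = i
      · subst h1
        have : l ≠ j := hij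
        simp only [hn', if_pos rfl, if_neg this]
        push_cast [hni]
        ring
      · by_cases h2 : l = j
        · subst h2
          simp only [hn', if_neg h1, if_pos rfl]
          push_cast [hnj]
          ring
        · simp [hn', h1, h2]
    rw [Finset.sum_congr rfl (fun l _ => key l)]
    rw [Finset.sum_sub_distrib, Finset.sum_sub_distrib]
    simp
  -- the compensating word G
  set G : Matrix (Fin 4) (Fin 4) ℤ :=
    ((List.finRange k).map fun l => A l ^ n' l).prod with hGdef
  obtain ⟨dG, hG⟩ := Pu_list A α β κ δ hA n' (List.finRange k)
  rw [← Fin.sum_univ_def, ← Fin.sum_univ_def, ← Fin.sum_univ_def, ← hGdef] at hG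
  have hGa : ∑ l, (n' l : ℤ) * α l = -(α i + α j) := by rw [hsum' α, hsa]; ring
  have hGb : ∑ l, (n' l : ℤ) * β l = -(β i + β j) := by rw [hsum' β, hsb]; ring
  have hGc : ∑ l, (n' l : ℤ) * κ l = -(κ i + κ j) := by rw [hsum' κ, hsc]; ring
  rw [hGa, hGb, hGc] at hG
  -- parameters
  set B : ℤ := 2*(δ i + δ j + dG) - (α i*β i + α j*β j + (α i + α j)*(β i + β j)) with hB
  set m : ℕ := B.natAbs + 1 with hm
  have hm1 : 1 ≤ m := by omega
  have hmB : (m : ℤ) = (B.natAbs : ℤ) + 1 := by rw [hm]; push_cast; ring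
  have hBbound : B ≤ (B.natAbs : ℤ) ∧ -(B.natAbs : ℤ) ≤ B := by omega
  have hc2 := choose_two m
  set c2 : ℤ := (m.choose 2 : ℤ) with hc2def
  -- the two words
  set Z1 : Matrix (Fin 4) (Fin 4) ℤ := A i ^ m * (A j ^ m * G ^ m) with hZ1def
  set Z2 : Matrix (Fin 4) (Fin 4) ℤ := A j ^ m * (A i ^ m * G ^ m) with hZ2def
  set S' : ℤ := α i*β i + α j*β j + (α i + α j)*(β i + β j) with hS'
  set L : ℤ := δ i + δ j + dG with hL
  set x1 : ℤ := m*L + c2*S' + (m:ℤ)^2*(α i*β j) - (m:ℤ)^2*((α i + α j)*(β i + β j)) with hx1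
  set x2 : ℤ := m*L + c2*S' + (m:ℤ)^2*(α j*β i) - (m:ℤ)^2*((α i + α j)*(β i + β j)) with hx2
  have hPZ1 : Pu Z1 0 0 0 x1 := by
    have := Pu_mul (Pu_pow (hA i) m) (Pu_mul (Pu_pow (hA j) m) (Pu_pow hG m))
    rw [← hZ1def] at this
    exact Pu_congr this (by ring) (by ring) (by ring) (by rw [hx1, hL, hS', hc2def]; ring)
  have hPZ2 : Pu Z2 0 0 0 x2 := by
    have := Pu_mul (Pu_pow (hA j) m) (Pu_mul (Pu_pow (hA i) m) (Pu_pow hG m))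
    rw [← hZ2def] at this
    exact Pu_congr this (by ring) (by ring) (by ring) (by rw [hx2, hL, hS', hc2def]; ring)
  -- sum and difference identities
  have hsum12 : x1 + x2 = m * B := by
    rw [hx1, hx2, hB, hL, hS']
    linear_combination (α i*β i + α j*β j + (α i + α j)*(β i + β j)) * hc2
  have hdiff12 : x1 - x2 = (m:ℤ)^2 * (α i*β j - α j*β i) := by rw [hx1, hx2]; ring
  -- closure membership
  have hmemZ : Z1 ∈ Subsemigroup.closure (Set.range A) ∧
      Z2 ∈ Subsemigroup.closure (Set.range A) := by
    have hi : A i ^ m ∈ Subsemigroup.closure (Set.range A) :=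
      pow_mem_sub _ (Subsemigroup.subset_closure (Set.mem_range_self i)) _ hm1
    have hj : A j ^ m ∈ Subsemigroup.closure (Set.range A) :=
      pow_mem_sub _ (Subsemigroup.subset_closure (Set.mem_range_self j)) _ hm1
    rcases list_prod_mem_or_one A n' (List.finRange k) with hGm | hGm
    · rw [← hGdef] at hGm
      have hGp := pow_mem_sub _ hGm m hm1
      exact ⟨Subsemigroup.mul_mem _ hi (Subsemigroup.mul_mem _ hj hGp),
        Subsemigroup.mul_mem _ hj (Subsemigroup.mul_mem _ hi hGp)⟩
    · rw [← hGdef] at hGm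
      rw [hZ1def, hZ2def, hGm, one_pow]
      simp only [mul_one]
      exact ⟨Subsemigroup.mul_mem _ hi hj, Subsemigroup.mul_mem _ hj hi⟩
  -- final: combine a positive-d and a negative-d word
  have hfinal : ∀ (u v : Matrix (Fin 4) (Fin 4) ℤ) (X Y : ℤ),
      Pu u 0 0 0 X → Pu v 0 0 0 Y → 0 < X → Y < 0 →
      u ∈ Subsemigroup.closure (Set.range A) → v ∈ Subsemigroup.closure (Set.range A) →
      ∃ M ∈ Subsemigroup.closure (Set.range A), M ∈ U10 := by
    intro u v X Y hu hv hX hY humem hvmem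
    have hsY : 1 ≤ Y.natAbs := by omega
    have hsX : 1 ≤ X.natAbs := by omega
    refine ⟨u ^ Y.natAbs * v ^ X.natAbs,
      Subsemigroup.mul_mem _ (pow_mem_sub _ humem _ hsY) (pow_mem_sub _ hvmem _ hsX), ?_⟩
    have hP := Pu_mul (Pu_pow hu Y.natAbs) (Pu_pow hv X.natAbs)
    have hcast1 : (Y.natAbs : ℤ) = -Y := by omega
    have hcast2 : (X.natAbs : ℤ) = X := by omega
    have : Pu (u ^ Y.natAbs * v ^ X.natAbs) 0 0 0 0 :=
      Pu_congr hP (by ring) (by ring) (by ring)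
        (by rw [hcast1, hcast2]; ring)
    obtain ⟨e, f, hef⟩ := this
    exact ⟨e, f, hef⟩
  -- sign analysis
  have hMz1 : (1:ℤ) ≤ (m:ℤ) := by exact_mod_cast hm1
  have hkey : (m:ℤ)^2 - (m:ℤ)*(B.natAbs:ℤ) = (m:ℤ) := by rw [hmB]; ring
  have hBup : (m:ℤ) * B ≤ (m:ℤ)*(B.natAbs:ℤ) :=
    mul_le_mul_of_nonneg_left hBbound.1 (by linarith)
  have hBdn : (m:ℤ)*(-(B.natAbs:ℤ)) ≤ (m:ℤ) * B :=
    mul_le_mul_of_nonneg_left hBbound.2 (by linarith)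
  rcases lt_or_gt_of_ne hD with hDneg | hDpos
  · -- D ≤ -1 : x2 > 0 > x1
    have hD1 : α i * β j - α j * β i ≤ -1 := by omega
    have key1 : (m:ℤ)^2 * (α i * β j - α j * β i) ≤ (m:ℤ)^2 * (-1) :=
      mul_le_mul_of_nonneg_left hD1 (sq_nonneg _)
    have hx2pos : 0 < x2 := by linarith [hsum12, hdiff12, hBdn, key1, hkey, hMz1]
    have hx1neg : x1 < 0 := by linarith [hsum12, hdiff12, hBup, key1, hkey, hMz1]
    exact hfinal Z2 Z1 x2 x1 hPZ2 hPZ1 hx2pos hx1neg hmemZ.2 hmemZ.1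
  · have hD1 : (1:ℤ) ≤ α i * β j - α j * β i := hDpos
    have key1 : (m:ℤ)^2 * 1 ≤ (m:ℤ)^2 * (α i * β j - α j * β i) :=
      mul_le_mul_of_nonneg_left hD1 (sq_nonneg _)
    have hx1pos : 0 < x1 := by linarith [hsum12, hdiff12, hBdn, key1, hkey, hMz1]
    have hx2neg : x2 < 0 := by linarith [hsum12, hdiff12, hBup, key1, hkey, hMz1]
    exact hfinal Z1 Z2 x1 x2 hPZ1 hPZ2 hx1pos hx2neg hmemZ.1 hmemZ.2

/-- nonneg real cone membership of `(x1,x2)` for the projected integer vectors -/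
def C2 {k : ℕ} (α β : Fin k → ℤ) (x1 x2 : ℝ) : Prop :=
  ∃ s : Fin k → ℝ, (∀ m, 0 ≤ s m) ∧ x1 = ∑ m, s m * α m ∧ x2 = ∑ m, s m * β m

lemma C2_gen {k : ℕ} (α β : Fin k → ℤ) (l : Fin k) : C2 α β (α l) (β l) := by
  classical
  refine ⟨fun m => if m = l then 1 else 0, fun m => by positivity, ?_, ?_⟩ <;>
    simp [ite_mul, Finset.sum_ite_eq']

lemma C2_add {k : ℕ} {α β : Fin k → ℤ} {x1 x2 y1 y2 : ℝ}
    (h : C2 α β x1 x2) (h' : C2 α β y1 y2) : C2 α β (x1 + y1) (x2 + y2) := by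
  obtain ⟨s, hs, h1, h2⟩ := h
  obtain ⟨t, ht, h3, h4⟩ := h'
  refine ⟨fun m => s m + t m, fun m => add_nonneg (hs m) (ht m), ?_, ?_⟩ <;>
    subst h1 h2 h3 h4 <;> rw [← Finset.sum_add_distrib] <;>
    exact Finset.sum_congr rfl fun m _ => by ring

lemma C2_smul {k : ℕ} {α β : Fin k → ℤ} {x1 x2 : ℝ} {t : ℝ}
    (ht : 0 ≤ t) (h : C2 α β x1 x2) : C2 α β (t * x1) (t * x2) := by
  obtain ⟨s, hs, h1, h2⟩ := h
  refine ⟨fun m => t * s m, fun m => mul_nonneg ht (hs m), ?_, ?_⟩ <;>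
    subst h1 h2 <;> rw [Finset.mul_sum] <;>
    exact Finset.sum_congr rfl fun m _ => by ring

lemma C2_line {k : ℕ} {α β : Fin k → ℤ}
    (hneg : ∀ l, C2 α β (-(α l : ℝ)) (-(β l : ℝ))) (l : Fin k) (t : ℝ) :
    C2 α β (t * α l) (t * β l) := by
  rcases le_or_gt 0 t with ht | ht
  · exact C2_smul ht (C2_gen α β l)
  · have := C2_smul (by linarith : (0:ℝ) ≤ -t) (hneg l)
    convert this using 1 <;> ring

lemma C2_total {k : ℕ} {α β : Fin k → ℤ} {i0 j0 : Fin k}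
    (hD0 : α i0 * β j0 - α j0 * β i0 ≠ 0)
    (hneg : ∀ l, C2 α β (-(α l : ℝ)) (-(β l : ℝ))) (x1 x2 : ℝ) :
    C2 α β x1 x2 := by
  set D : ℝ := ((α i0 * β j0 - α j0 * β i0 : ℤ) : ℝ) with hDdef
  have hD : D ≠ 0 := by
    simp only [hDdef, ne_eq, Int.cast_eq_zero]
    exact_mod_cast hD0
  set c1 : ℝ := (x1 * β j0 - x2 * α j0) / D with hc1
  set c2 : ℝ := (x2 * α i0 - x1 * β i0) / D with hc2
  have h1 : x1 = c1 * α i0 + c2 * α j0 := by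
    rw [hc1, hc2, div_mul_eq_mul_div, div_mul_eq_mul_div, ← add_div,
      eq_div_iff hD, hDdef]
    push_cast; ring
  have h2 : x2 = c1 * β i0 + c2 * β j0 := by
    rw [hc1, hc2, div_mul_eq_mul_div, div_mul_eq_mul_div, ← add_div,
      eq_div_iff hD, hDdef]
    push_cast; ring
  rw [h1, h2]
  exact C2_add (C2_line hneg i0 c1) (C2_line hneg j0 c2)

lemma exists_pos_term {k : ℕ} (F : Fin k → ℝ) (h : 0 < ∑ m, F m) : ∃ m, 0 < F m := by
  by_contra hcon
  push_neg at hcon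
  have := Finset.sum_nonpos (fun m (_ : m ∈ Finset.univ) => hcon m)
  linarith

lemma sum_ind {k : ℕ} (c1 c2 c3 : ℕ) (l b c : Fin k) (g : Fin k → ℤ) :
    ∑ mm, ((c1 * (if mm = l then 1 else 0) + c2 * (if mm = b then 1 else 0)
      + c3 * (if mm = c then 1 else 0) : ℕ) : ℤ) * g mm
      = (c1 : ℤ) * g l + (c2 : ℤ) * g b + (c3 : ℤ) * g c := by
  classical
  have : ∀ mm, ((c1 * (if mm = l then 1 else 0) + c2 * (if mm = b then 1 else 0)
      + c3 * (if mm = c then 1 else 0) : ℕ) : ℤ) * g mm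
      = (if mm = l then (c1:ℤ) * g mm else 0) + (if mm = b then (c2:ℤ) * g mm else 0)
        + (if mm = c then (c3:ℤ) * g mm else 0) := by
    intro mm
    push_cast
    split_ifs <;> ring
  rw [Finset.sum_congr rfl fun mm _ => this mm]
  rw [Finset.sum_add_distrib, Finset.sum_add_distrib]
  simp [Finset.sum_ite_eq']

/-- Each nonzero projected generator participates in a nonnegative integer relation. -/
theorem relpart {k : ℕ} (α β : Fin k → ℤ) {i0 j0 : Fin k}
    (hD0 : α i0 * β j0 - α j0 * β i0 ≠ 0)
    (hneg : ∀ l, C2 α β (-(α l : ℝ)) (-(β l : ℝ)))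
    (l : Fin k) (hl : α l ≠ 0 ∨ β l ≠ 0) :
    ∃ n : Fin k → ℕ, 1 ≤ n l ∧ ∑ m, (n m : ℤ) * α m = 0 ∧ ∑ m, (n m : ℤ) * β m = 0 := by
  classical
  have husq : (0:ℤ) < α l ^ 2 + β l ^ 2 := by
    rcases hl with h | h
    · have : 0 < α l ^ 2 := by positivity
      nlinarith [sq_nonneg (β l)]
    · have : 0 < β l ^ 2 := by positivity
      nlinarith [sq_nonneg (α l)]
  have husqR : (0:ℝ) < (α l:ℝ) ^ 2 + (β l:ℝ) ^ 2 := by exact_mod_cast husq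
  -- a generic sum manipulation
  have hdetsum : ∀ (s : Fin k → ℝ) (u1 u2 : Fin k),
      ∑ m, s m * ((α u1 * β m - α m * β u1 : ℤ):ℝ)
        = (α u1 : ℝ) * (∑ m, s m * β m) - (β u1 : ℝ) * (∑ m, s m * α m) := by
    intro s u1 u2
    rw [Finset.mul_sum, Finset.mul_sum, ← Finset.sum_sub_distrib]
    apply Finset.sum_congr rfl
    intro m _
    push_cast
    ring
  -- step 1 : find b with det l b > 0
  have hstep1 : ∃ b, 0 < α l * β b - α b * β l := by
    obtain ⟨s, hs, hs1, hs2⟩ := C2_total hD0 hneg (-(β l:ℝ)) ((α l : ℝ))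
    have hpos : (0:ℝ) < ∑ m, s m * ((α l * β m - α m * β l : ℤ):ℝ) := by
      rw [hdetsum s l l, ← hs1, ← hs2]
      nlinarith [husqR]
    obtain ⟨m, hm⟩ := exists_pos_term _ hpos
    refine ⟨m, ?_⟩
    have hsm := hs m
    have : (0:ℝ) < ((α l * β m - α m * β l : ℤ):ℝ) := by
      by_contra hc
      push_neg at hc
      nlinarith
    exact_mod_cast this
  obtain ⟨b0, hb0⟩ := hstep1
  -- step 2 : maximal element of the open half plane
  set Hp : Finset (Fin k) := Finset.univ.filter (fun m => 0 < α l * β m - α m * β l)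
    with hHp
  have hHpne : Hp.Nonempty :=
    ⟨b0, by simp only [hHp, Finset.mem_filter, Finset.mem_univ, true_and]; omega⟩
  obtain ⟨b, hbmem, hbmax⟩ := Hp.exists_max_image
    (fun m => -((α l * α m + β l * β m : ℤ):ℝ) / ((α l * β m - α m * β l : ℤ):ℝ)) hHpne
  have hdb : 0 < α l * β b - α b * β l := by
    have := Finset.mem_filter.mp hbmem
    exact this.2
  have hdbR : (0:ℝ) < ((α l * β b - α b * β l : ℤ):ℝ) := by exact_mod_cast hdb
  have hmax' : ∀ m, 0 < α l * β m - α m * β l → α b * β m - α m * β b ≤ 0 := by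
    intro m hdm
    have hmmem : m ∈ Hp := by
      simp only [hHp, Finset.mem_filter, Finset.mem_univ, true_and]; omega
    have hkey := hbmax m hmmem
    have hdmR : (0:ℝ) < ((α l * β m - α m * β l : ℤ):ℝ) := by exact_mod_cast hdm
    rw [div_le_div_iff₀ hdmR hdbR] at hkey
    have hZ : (α l * α b + β l * β b) * (α l * β m - α m * β l)
        - (α l * α m + β l * β m) * (α l * β b - α b * β l) ≤ 0 := by
      have : ((α l * α b + β l * β b : ℤ):ℝ) * ((α l * β m - α m * β l : ℤ):ℝ)
          - ((α l * α m + β l * β m : ℤ):ℝ) * ((α l * β b - α b * β l : ℤ):ℝ) ≤ 0 := by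
        nlinarith [hkey]
      exact_mod_cast this
    have hid : (α l ^ 2 + β l ^ 2) * (α b * β m - α m * β b)
        = (α l * α b + β l * β b) * (α l * β m - α m * β l)
          - (α l * α m + β l * β m) * (α l * β b - α b * β l) := by ring
    nlinarith [husq, hZ, hid]
  -- step 3 : find c on the other side
  have hstep3 : ∃ c, 0 < α b * β c - α c * β b ∧ α l * β c - α c * β l ≤ 0 := by
    obtain ⟨s, hs, hs1, hs2⟩ := C2_total hD0 hneg
      (-(α l:ℝ) - (α b:ℝ)) (-(β l:ℝ) - (β b:ℝ))
    have hpos : (0:ℝ) < ∑ m, s m * ((α b * β m - α m * β b : ℤ):ℝ) := by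
      rw [hdetsum s b b, ← hs1, ← hs2]
      have h' := hdbR
      push_cast at h' ⊢
      nlinarith [h']
    obtain ⟨m, hm⟩ := exists_pos_term _ hpos
    have hsm := hs m
    have hdmR : (0:ℝ) < ((α b * β m - α m * β b : ℤ):ℝ) := by
      by_contra hc
      push_neg at hc
      nlinarith
    have hdm : 0 < α b * β m - α m * β b := by exact_mod_cast hdmR
    refine ⟨m, hdm, ?_⟩
    by_contra hc
    push_neg at hc
    exact absurd (hmax' m hc) (by linarith)
  obtain ⟨c, hbc, hlc⟩ := hstep3
  rcases lt_or_eq_of_le hlc with hlcneg | hlczero0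
  · -- Case A : genuine triple
    set E1 : ℤ := α b * β c - α c * β b with hE1
    set E2 : ℤ := -(α l * β c - α c * β l) with hE2
    set E3 : ℤ := α l * β b - α b * β l with hE3
    have hE1p : 0 < E1 := hbc
    have hE2p : 0 < E2 := by omega
    have hE3p : 0 < E3 := hdb
    refine ⟨fun mm => E1.toNat * (if mm = l then 1 else 0) + E2.toNat * (if mm = b then 1 else 0)
      + E3.toNat * (if mm = c then 1 else 0), ?_, ?_, ?_⟩
    · have h1 : 1 ≤ E1.toNat := by omega
      show 1 ≤ E1.toNat * (if l = l then 1 else 0) + E2.toNat * (if l = b then 1 else 0)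
        + E3.toNat * (if l = c then 1 else 0)
      rw [if_pos rfl, mul_one]
      exact le_trans h1 (le_trans (Nat.le_add_right _ _) (Nat.le_add_right _ _))
    · rw [sum_ind]
      rw [Int.toNat_of_nonneg (le_of_lt hE1p), Int.toNat_of_nonneg (le_of_lt hE2p),
        Int.toNat_of_nonneg (le_of_lt hE3p), hE1, hE2, hE3]
      ring
    · rw [sum_ind]
      rw [Int.toNat_of_nonneg (le_of_lt hE1p), Int.toNat_of_nonneg (le_of_lt hE2p),
        Int.toNat_of_nonneg (le_of_lt hE3p), hE1, hE2, hE3]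
      ring
  · -- Case B : c is opposite-parallel to l
    have h0 : α l * β c - α c * β l = 0 := hlczero0
    set E : ℤ := α b * β c - α c * β b with hE
    set K : ℤ := α l * β b - α b * β l with hK
    have hEp : 0 < E := hbc
    have hKp : 0 < K := hdb
    have hca : K * α c + E * α l = 0 := by
      rw [hK, hE]; linear_combination (α b) * h0
    have hcb : K * β c + E * β l = 0 := by
      rw [hK, hE]; linear_combination (β b) * h0
    refine ⟨fun mm => E.toNat * (if mm = l then 1 else 0) + 0 * (if mm = l then 1 else 0)
      + K.toNat * (if mm = c then 1 else 0), ?_, ?_, ?_⟩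
    · have h1 : 1 ≤ E.toNat := by omega
      show 1 ≤ E.toNat * (if l = l then 1 else 0) + 0 * (if l = l then 1 else 0)
        + K.toNat * (if l = c then 1 else 0)
      rw [if_pos rfl, mul_one]
      exact le_trans h1 (le_trans (Nat.le_add_right _ _) (Nat.le_add_right _ _))
    · rw [sum_ind]
      rw [Int.toNat_of_nonneg (le_of_lt hEp), Int.toNat_of_nonneg (le_of_lt hKp)]
      push_cast
      linarith [hca]
    · rw [sum_ind]
      rw [Int.toNat_of_nonneg (le_of_lt hEp), Int.toNat_of_nonneg (le_of_lt hKp)]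
      push_cast
      linarith [hcb]

theorem conepart {k : ℕ} (α β : Fin k → ℤ)
    (hgen : ∃ i0 j0, α i0 * β j0 - α j0 * β i0 ≠ 0)
    (hneg : ∀ l, C2 α β (-(α l : ℝ)) (-(β l : ℝ))) :
    ∃ (i j : Fin k) (n : Fin k → ℕ), α i * β j - α j * β i ≠ 0 ∧ 1 ≤ n i ∧ 1 ≤ n j ∧
      ∑ m, (n m : ℤ) * α m = 0 ∧ ∑ m, (n m : ℤ) * β m = 0 := by
  obtain ⟨i0, j0, hD0⟩ := hgen
  have hi0 : α i0 ≠ 0 ∨ β i0 ≠ 0 := by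
    by_contra hc
    push_neg at hc
    rw [hc.1, hc.2] at hD0
    simp at hD0
  have hj0 : α j0 ≠ 0 ∨ β j0 ≠ 0 := by
    by_contra hc
    push_neg at hc
    rw [hc.1, hc.2] at hD0
    simp at hD0
  obtain ⟨n1, hn1, hs1a, hs1b⟩ := relpart α β hD0 hneg i0 hi0
  obtain ⟨n2, hn2, hs2a, hs2b⟩ := relpart α β hD0 hneg j0 hj0
  refine ⟨i0, j0, fun mm => n1 mm + n2 mm, hD0, hn1.trans (Nat.le_add_right _ _), hn2.trans (Nat.le_add_left _ _), ?_, ?_⟩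
  · have : ∀ mm, ((n1 mm + n2 mm : ℕ):ℤ) * α mm = (n1 mm : ℤ) * α mm + (n2 mm:ℤ) * α mm := by
      intro mm; push_cast; ring
    rw [Finset.sum_congr rfl fun mm _ => this mm, Finset.sum_add_distrib, hs1a, hs2a]
    ring
  · have : ∀ mm, ((n1 mm + n2 mm : ℕ):ℤ) * β mm = (n1 mm : ℤ) * β mm + (n2 mm:ℤ) * β mm := by
      intro mm; push_cast; ring
    rw [Finset.sum_congr rfl fun mm _ => this mm, Finset.sum_add_distrib, hs1b, hs2b]
    ring

theorem stmt16 (k : ℕ) (α β κ δ ε φ : Fin k → ℤ)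
    (A : Fin k → Matrix (Fin 4) (Fin 4) ℤ)
    (hA : ∀ i, A i = UT (α i) (β i) (κ i) (δ i) (ε i) (φ i))
    (hClin : coneFin (fun i => phi0R (A i)) =
      coneFin (fun i => phi0R (A i)) ∩ -(coneFin (fun i => phi0R (A i))))
    (hdim : Module.finrank ℝ
      (Submodule.span ℝ (coneFin (fun i => phi0R (A i)))) = 2)
    (p q r : ℤ) (hpqr : ¬(p = 0 ∧ q = 0 ∧ r = 0))
    (hrel : ∀ i, p * α i + q * β i + r * κ i = 0)
    (hr : r ≠ 0) :
    ∃ M ∈ Subsemigroup.closure (Set.range A), M ∈ U10 := by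
  classical
  have hvl : ∀ l, phi0R (A l) = ![(α l : ℝ), (β l : ℝ), (κ l : ℝ)] := by
    intro l
    rw [hA l]
    funext idx
    fin_cases idx <;> simp [phi0R, UT, Matrix.vecHead, Matrix.vecTail]
  have hPl : ∀ l, Pu (A l) (α l) (β l) (κ l) (δ l) := fun l => ⟨ε l, φ l, hA l⟩
  -- the κ-sums of relations vanish automatically
  have hκ0 : ∀ (n : Fin k → ℕ), (∑ l, (n l : ℤ) * α l = 0) → (∑ l, (n l : ℤ) * β l = 0) →
      ∑ l, (n l : ℤ) * κ l = 0 := by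
    intro n ha hb
    have h : r * ∑ l, (n l : ℤ) * κ l = 0 := by
      rw [Finset.mul_sum]
      have h2 : ∀ l, r * ((n l : ℤ) * κ l)
          = -p * ((n l : ℤ) * α l) - q * ((n l : ℤ) * β l) := by
        intro l; linear_combination (n l : ℤ) * hrel l
      rw [Finset.sum_congr rfl fun l _ => h2 l, Finset.sum_sub_distrib,
        ← Finset.mul_sum, ← Finset.mul_sum, ha, hb]
      ring
    rcases mul_eq_zero.mp h with h' | h'
    · exact absurd h' hr
    · exact h'
  -- each -w_l lies in the projected cone
  have hneg : ∀ l, C2 α β (-(α l : ℝ)) (-(β l : ℝ)) := by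
    intro l
    have hmem : phi0R (A l) ∈ coneFin (fun i => phi0R (A i)) := by
      refine ⟨fun m => if m = l then 1 else 0, fun m => by positivity, ?_⟩
      simp [ite_smul, Finset.sum_ite_eq']
    rw [hClin] at hmem
    have hmem2 := hmem.2
    rw [Set.mem_neg] at hmem2
    obtain ⟨s, hs, heq⟩ := hmem2
    simp only [hvl] at heq
    refine ⟨s, hs, ?_, ?_⟩
    · have h0 := congrFun heq 0
      simpa [Finset.sum_apply, Pi.smul_apply] using h0
    · have h1 := congrFun heq 1
      simpa [Finset.sum_apply, Pi.smul_apply] using h1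
  -- the projected generators are not all collinear
  have hgen : ∃ i0 j0, α i0 * β j0 - α j0 * β i0 ≠ 0 := by
    by_contra hcon
    push_neg at hcon
    by_cases hex : ∃ m, ¬(α m = 0 ∧ β m = 0)
    · obtain ⟨m0, hm0⟩ := hex
      have hvm0 : phi0R (A m0) ≠ 0 := by
        rw [hvl m0]
        intro hzz
        apply hm0
        have h0 := congrFun hzz 0
        have h1 := congrFun hzz 1
        simp at h0 h1
        exact ⟨by exact_mod_cast h0, by exact_mod_cast h1⟩
      set T : Fin k → ℝ := fun l =>
        if (α m0 : ℝ) = 0 then (β l : ℝ) / (β m0 : ℝ) else (α l : ℝ) / (α m0 : ℝ) with hT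
      have hline : ∀ l, phi0R (A l) = T l • phi0R (A m0) := by
        intro l
        rw [hvl l, hvl m0]
        by_cases hα : (α m0 : ℝ) = 0
        · have hαZ : α m0 = 0 := by exact_mod_cast hα
          have hβZ : β m0 ≠ 0 := by
            intro hc; exact hm0 ⟨hαZ, hc⟩
          have hβ : (β m0 : ℝ) ≠ 0 := Int.cast_ne_zero.mpr hβZ
          have hαl : α l = 0 := by
            have := hcon l m0
            rw [hαZ] at this
            simp at this
            rcases this with h' | h'
            · exact h'
            · exact absurd h' hβZ
          have hκl : κ l * β m0 = β l * κ m0 := by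
            have hzz : r * (κ l * β m0 - β l * κ m0) = 0 := by
              linear_combination (β m0 : ℤ) * hrel l - (β l : ℤ) * hrel m0 - p * hcon l m0
            have := (mul_eq_zero.mp hzz).resolve_left hr
            linarith
          funext idx
          simp only [hT, if_pos hα]
          fin_cases idx
          · simp [hα, hαl]
          · simp [Pi.smul_apply]
            field_simp
          · simp [Pi.smul_apply]
            rw [div_mul_eq_mul_div, eq_div_iff hβ]
            exact_mod_cast (by linarith [hκl] : (κ l * β m0 : ℤ) = β l * κ m0)
        · have hαZ : α m0 ≠ 0 := fun hc => hα (by exact_mod_cast hc)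
          have hβl : β l * α m0 = α l * β m0 := by
            have := hcon l m0
            linarith
          have hκl : κ l * α m0 = α l * κ m0 := by
            have hzz : r * (κ l * α m0 - α l * κ m0) = 0 := by
              linear_combination (α m0 : ℤ) * hrel l - (α l : ℤ) * hrel m0 + q * hcon l m0
            have := (mul_eq_zero.mp hzz).resolve_left hr
            linarith
          funext idx
          simp only [hT, if_neg hα]
          fin_cases idx
          · simp [Pi.smul_apply]
            field_simp
          · simp [Pi.smul_apply]
            rw [div_mul_eq_mul_div, eq_div_iff hα]
            exact_mod_cast (by linarith [hβl] : (β l * α m0 : ℤ) = α l * β m0)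
          · simp [Pi.smul_apply]
            rw [div_mul_eq_mul_div, eq_div_iff hα]
            exact_mod_cast (by linarith [hκl] : (κ l * α m0 : ℤ) = α l * κ m0)
      have hsub : coneFin (fun i => phi0R (A i)) ⊆
          (Submodule.span ℝ ({phi0R (A m0)} : Set (Fin 3 → ℝ)) : Set (Fin 3 → ℝ)) := by
        rintro x hx
        obtain ⟨s, hs0, rfl⟩ := hx
        apply Submodule.sum_mem
        intro m _
        have hm' : (fun i => phi0R (A i)) m = T m • phi0R (A m0) := hline m
        rw [hm', smul_smul]
        exact Submodule.smul_mem _ _ (Submodule.mem_span_singleton_self _)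
      have hle := Submodule.span_le.mpr hsub
      have hfr := Submodule.finrank_mono hle
      rw [hdim, finrank_span_singleton hvm0] at hfr
      omega
    · push_neg at hex
      have hall : ∀ m, phi0R (A m) = 0 := by
        intro m
        have hκm : κ m = 0 := by
          have := hrel m
          rw [(hex m).1, (hex m).2] at this
          simp at this
          rcases this with h' | h'
          · exact absurd h' hr
          · exact h'
        rw [hvl m, (hex m).1, (hex m).2, hκm]
        funext idx
        fin_cases idx <;> simp
      have hcone : coneFin (fun i => phi0R (A i)) = {0} := by
        ext x
        constructor
        · rintro ⟨s, hs0, rfl⟩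
          simp [hall]
        · intro hx
          rw [Set.mem_singleton_iff] at hx
          subst hx
          exact ⟨fun _ => 0, fun _ => le_refl 0, by simp⟩
      rw [hcone, Submodule.span_zero_singleton, finrank_bot] at hdim
      omega
  obtain ⟨i, j, n, hDij, hni, hnj, hsa, hsb⟩ := conepart α β hgen hneg
  exact wordpart k α β κ δ A hPl i j n hDij hni hnj hsa hsb (hκ0 n hsa hsb)
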